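/- Let φ : ℝ₊ → ℝ₊ be an increasing continuous bijection such that for some fixed α₁, α₂, β₁, β₂ > 0 with α₁ + α₂ > 1 > α₁, the inequality α₁φ⁻¹(β₁φ(s)+β₂φ(t)) + α₂φ⁻¹(β₁φ(u)+β₂φ(v)) ≤ φ⁻¹(β₁φ(α₁s+α₂u) + β₂φ(α₁t+α₂v)) holds for all s,t,u,v > 0. Then the function Φ(x₁,x₂) = φ⁻¹(β₁φ(x₁)+β₂φ(x₂)) is positively homogeneous and superadditive on ℝ₊ × ℝ₊. -/

import Mathlib

/-!
For `l > 0` write `l ∈ G` when `l * Φ a b ≤ Φ (l * a) (l * b)` for all `a, b > 0`; `G` is a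
multiplicative monoid. The hypothesis makes `G` closed under `(l, k) ↦ α₁ l + α₂ k`, and letting
the second pair of arguments tend to `0` puts `α₁ < 1` into `G`. The orbit of `1` under
`x ↦ α₁ x + α₂` lies in `G` and increases to `α₂ / (1 - α₁) > 1`, so its consecutive ratios tend
to `1`; together with `α₁` this makes `log G` dense in `ℝ`. By continuity of `Φ` every `γ > 0` is
then in `G`, and comparing `γ` with `γ⁻¹` gives homogeneity. Superadditivity is the hypothesis
applied to `x / α₁` and `y / α₂`.
-/

open Filter Topology Set

theorem AddSubmonoid.dense_of_neg_mem_of_exists_near (S : AddSubmonoid ℝ) {A : ℝ} (hA : 0 < A)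
    (hAS : -A ∈ S) (hnear : ∀ δ > 0, ∃ u ∈ S, ∃ v ∈ S, 0 < u ∧ u < v ∧ v < u + δ) :
    Dense (S : Set ℝ) := by
  refine dense_iff_exists_between.2 fun a b hab => ?_
  obtain ⟨u, hu, v, hv, hu0, huv, hvu⟩ := hnear (b - a) (sub_pos.2 hab)
  set D := v - u
  have hD0 : 0 < D := sub_pos.2 huv
  obtain ⟨P, hP⟩ := exists_nat_gt (max (a / u) (A / D))
  have hPu : a < P * u := (div_lt_iff₀ hu0).1 ((le_max_left _ _).trans_lt hP)
  have hPD : A < P * D := (div_lt_iff₀ hD0).1 ((le_max_right _ _).trans_lt hP)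
  -- `P • u` lies above `a`; subtracting `r` copies of `A` lands in `(a - A, a]`, and
  -- trading `q ≤ P` copies of `u` for copies of `v` climbs back in steps `D < b - a`.
  set r := ⌈(P * u - a) / A⌉₊
  set t := P * u - r * A
  have hr := Nat.le_ceil ((P * u - a) / A)
  have hr' := Nat.ceil_lt_add_one (div_nonneg (sub_nonneg.2 hPu.le) hA.le)
  rw [div_le_iff₀ hA] at hr
  rw [← sub_lt_iff_lt_add, lt_div_iff₀ hA] at hr'
  set q := ⌊(a - t) / D⌋₊ + 1
  have hq := Nat.floor_le (div_nonneg (by linarith : 0 ≤ a - t) hD0.le)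
  have hq' := Nat.lt_floor_add_one ((a - t) / D)
  rw [le_div_iff₀ hD0] at hq
  rw [div_lt_iff₀ hD0] at hq'
  have hqP : q ≤ P := by
    have : (q : ℝ) < P + 1 := by
      push_cast [q]
      nlinarith
    exact Nat.lt_succ_iff.1 (by exact_mod_cast this)
  refine ⟨(P - q) • u + q • v + r • (-A),
    add_mem (add_mem (nsmul_mem hu _) (nsmul_mem hv _)) (nsmul_mem hAS _), ?_, ?_⟩
  all_goals
    simp only [nsmul_eq_mul, Nat.cast_sub hqP]
    push_cast [q] at hq hq' ⊢
    nlinarith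

theorem Ioi_zero_subset_closure_of_exists_near (G : Submonoid ℝ) {a : ℝ} (ha : a ∈ G)
    (ha0 : 0 < a) (ha1 : a < 1)
    (hnear : ∀ ε > 1, ∃ x ∈ G, ∃ y ∈ G, 1 < x ∧ x < y ∧ y < ε * x) :
    Ioi (0 : ℝ) ⊆ closure (G : Set ℝ) := by
  let S : AddSubmonoid ℝ :=
    { carrier := {s | Real.exp s ∈ G}
      zero_mem' := by simp [G.one_mem]
      add_mem' := fun hs ht => by simpa [Real.exp_add] using G.mul_mem hs ht }
  have hS : Dense (S : Set ℝ) := by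
    refine S.dense_of_neg_mem_of_exists_near (neg_pos.2 (Real.log_neg ha0 ha1))
      (by simpa [S, Real.exp_log ha0] using ha) fun δ hδ => ?_
    obtain ⟨x, hx, y, hy, hx1, hxy, hyx⟩ := hnear (Real.exp δ) (Real.one_lt_exp_iff.2 hδ)
    have hx0 : 0 < x := one_pos.trans hx1
    refine ⟨Real.log x, by simpa [S, Real.exp_log hx0] using hx,
      Real.log y, by simpa [S, Real.exp_log (hx0.trans hxy)] using hy,
      Real.log_pos hx1, Real.log_lt_log hx0 hxy, ?_⟩
    calc Real.log y < Real.log (Real.exp δ * x) := Real.log_lt_log (hx0.trans hxy) hyx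
      _ = Real.log x + δ := by
        rw [Real.log_mul (Real.exp_pos δ).ne' hx0.ne', Real.log_exp, add_comm]
  intro x hx
  have hx' : x ∈ Real.exp '' closure (S : Set ℝ) :=
    ⟨Real.log x, by simp [hS.closure_eq], Real.exp_log hx⟩
  exact closure_mono (image_subset_iff.2 fun _ hs => hs)
    (image_closure_subset_closure_image Real.continuous_exp hx')

theorem MonotoneOn.continuousOn_of_isOpen_image {α β : Type*} [LinearOrder α] [TopologicalSpace α]
    [OrderTopology α] [LinearOrder β] [TopologicalSpace β] [OrderTopology β] [DenselyOrdered β]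
    {f : α → β} {s : Set α} (hf : MonotoneOn f s) (hs : IsOpen s) (hfs : IsOpen (f '' s)) :
    ContinuousOn f s := fun _ hx =>
  (continuousAt_of_monotoneOn_of_image_mem_nhds hf (hs.mem_nhds hx)
    (hfs.mem_nhds (mem_image_of_mem f hx))).continuousWithinAt

def WeightedSuperadditive (α₁ α₂ : ℝ) (Φ : ℝ → ℝ → ℝ) : Prop :=
  ∀ s t u v : ℝ, 0 < s → 0 < t → 0 < u → 0 < v →
    α₁ * Φ s t + α₂ * Φ u v ≤ Φ (α₁ * s + α₂ * u) (α₁ * t + α₂ * v)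

def superhomogeneousScalars (Φ : ℝ → ℝ → ℝ) : Submonoid ℝ where
  carrier := {l | 0 < l ∧ ∀ a b : ℝ, 0 < a → 0 < b → l * Φ a b ≤ Φ (l * a) (l * b)}
  one_mem' := ⟨one_pos, fun a b _ _ => by simp⟩
  mul_mem' := by
    rintro l k ⟨hl, hlΦ⟩ ⟨hk, hkΦ⟩
    refine ⟨mul_pos hl hk, fun a b ha hb => ?_⟩
    calc l * k * Φ a b = l * (k * Φ a b) := mul_assoc ..
      _ ≤ l * Φ (k * a) (k * b) := mul_le_mul_of_nonneg_left (hkΦ a b ha hb) hl.le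
      _ ≤ Φ (l * (k * a)) (l * (k * b)) := hlΦ _ _ (mul_pos hk ha) (mul_pos hk hb)
      _ = Φ (l * k * a) (l * k * b) := by simp only [mul_assoc]

-- the orbit of `1` under `x ↦ α₁ * x + α₂`, in closed form
noncomputable def affineOrbit (α₁ α₂ : ℝ) (n : ℕ) : ℝ := (α₂ - (α₁ + α₂ - 1) * α₁ ^ n) / (1 - α₁)

section

variable {α₁ α₂ : ℝ}

theorem affineOrbit_zero (h : α₁ ≠ 1) : affineOrbit α₁ α₂ 0 = 1 := by
  rw [affineOrbit, div_eq_one_iff_eq (sub_ne_zero.2 h.symm)]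
  ring

theorem affineOrbit_succ (h : α₁ ≠ 1) (n : ℕ) :
    affineOrbit α₁ α₂ (n + 1) = α₁ * affineOrbit α₁ α₂ n + α₂ := by
  have := sub_ne_zero.2 h.symm
  simp only [affineOrbit]
  field_simp
  ring

theorem affineOrbit_sub_one (h : α₁ ≠ 1) (n : ℕ) :
    affineOrbit α₁ α₂ n - 1 = (α₁ + α₂ - 1) * (1 - α₁ ^ n) / (1 - α₁) := by
  have := sub_ne_zero.2 h.symm
  simp only [affineOrbit]
  field_simp
  ring

theorem one_lt_affineOrbit (hα₁ : 0 ≤ α₁) (hα₁1 : α₁ < 1) (hsum : 1 < α₁ + α₂) {n : ℕ}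
    (hn : n ≠ 0) : 1 < affineOrbit α₁ α₂ n := by
  have h := affineOrbit_sub_one (α₂ := α₂) hα₁1.ne n
  have : 0 < (α₁ + α₂ - 1) * (1 - α₁ ^ n) / (1 - α₁) := by
    have := pow_lt_one₀ hα₁ hα₁1 hn
    exact div_pos (mul_pos (by linarith) (by linarith)) (by linarith)
  linarith

theorem affineOrbit_lt_succ (hα₁ : 0 < α₁) (hα₁1 : α₁ < 1) (hsum : 1 < α₁ + α₂) (n : ℕ) :
    affineOrbit α₁ α₂ n < affineOrbit α₁ α₂ (n + 1) := by
  have h := affineOrbit_sub_one (α₂ := α₂) hα₁1.ne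
  have : α₁ ^ (n + 1) < α₁ ^ n := pow_lt_pow_right_of_lt_one₀ hα₁ hα₁1 n.lt_succ_self
  have : (α₁ + α₂ - 1) * (1 - α₁ ^ n) / (1 - α₁) <
      (α₁ + α₂ - 1) * (1 - α₁ ^ (n + 1)) / (1 - α₁) := by
    gcongr
  linarith [h n, h (n + 1)]

theorem tendsto_affineOrbit (hα₁ : 0 ≤ α₁) (hα₁1 : α₁ < 1) :
    Tendsto (affineOrbit α₁ α₂) atTop (𝓝 (α₂ / (1 - α₁))) := by
  unfold affineOrbit
  have := ((tendsto_pow_atTop_nhds_zero_of_lt_one hα₁ hα₁1).const_mul (α₁ + α₂ - 1)).const_sub α₂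
  simpa using this.div_const (1 - α₁)

end

theorem map_mul_eq_of_mul_le_map_mul {Φ : ℝ → ℝ → ℝ}
    (h : ∀ γ > 0, ∀ a b, 0 < a → 0 < b → γ * Φ a b ≤ Φ (γ * a) (γ * b)) :
    ∀ γ > 0, ∀ a b, 0 < a → 0 < b → Φ (γ * a) (γ * b) = γ * Φ a b := by
  intro γ hγ a b ha hb
  refine le_antisymm ?_ (h γ hγ a b ha hb)
  have := h γ⁻¹ (inv_pos.2 hγ) (γ * a) (γ * b) (mul_pos hγ ha) (mul_pos hγ hb)
  rwa [inv_mul_cancel_left₀ hγ.ne', inv_mul_cancel_left₀ hγ.ne', inv_mul_le_iff₀ hγ] at this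

namespace WeightedSuperadditive

variable {Φ : ℝ → ℝ → ℝ} {α₁ α₂ : ℝ}

theorem add_mem_superhomogeneousScalars (hΦ : WeightedSuperadditive α₁ α₂ Φ) (hα₁ : 0 < α₁)
    (hα₂ : 0 < α₂) {l k : ℝ} (hl : l ∈ superhomogeneousScalars Φ)
    (hk : k ∈ superhomogeneousScalars Φ) : α₁ * l + α₂ * k ∈ superhomogeneousScalars Φ := by
  obtain ⟨hl, hlΦ⟩ := hl
  obtain ⟨hk, hkΦ⟩ := hk
  refine ⟨by positivity, fun a b ha hb => ?_⟩
  calc (α₁ * l + α₂ * k) * Φ a b = α₁ * (l * Φ a b) + α₂ * (k * Φ a b) := by ring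
    _ ≤ α₁ * Φ (l * a) (l * b) + α₂ * Φ (k * a) (k * b) := by
      gcongr
      exacts [hlΦ a b ha hb, hkΦ a b ha hb]
    _ ≤ Φ (α₁ * (l * a) + α₂ * (k * a)) (α₁ * (l * b) + α₂ * (k * b)) :=
      hΦ _ _ _ _ (by positivity) (by positivity) (by positivity) (by positivity)
    _ = Φ ((α₁ * l + α₂ * k) * a) ((α₁ * l + α₂ * k) * b) := by ring_nf

theorem mem_superhomogeneousScalars (hΦ : WeightedSuperadditive α₁ α₂ Φ) (hα₁ : 0 < α₁)
    (hα₂ : 0 < α₂) (hnonneg : ∀ a b, 0 < a → 0 < b → 0 ≤ Φ a b)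
    (hcont : ContinuousOn (Function.uncurry Φ) (Ioi 0 ×ˢ Ioi 0)) :
    α₁ ∈ superhomogeneousScalars Φ := by
  refine ⟨hα₁, fun a b ha hb => ?_⟩
  -- let the second pair `(w, w)` in the defining inequality shrink to `0`
  have hlim : Tendsto (fun w => Φ (α₁ * a + α₂ * w) (α₁ * b + α₂ * w)) (𝓝[>] 0)
      (𝓝 (Φ (α₁ * a) (α₁ * b))) := by
    have hat : ContinuousAt (Function.uncurry Φ) (α₁ * a, α₁ * b) :=
      hcont.continuousAt ((isOpen_Ioi.prod isOpen_Ioi).mem_nhds ⟨mul_pos hα₁ ha, mul_pos hα₁ hb⟩)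
    have hpath : Tendsto (fun w : ℝ => (α₁ * a + α₂ * w, α₁ * b + α₂ * w)) (𝓝 0)
        (𝓝 (α₁ * a, α₁ * b)) := by
      have : Continuous fun w : ℝ => (α₁ * a + α₂ * w, α₁ * b + α₂ * w) := by fun_prop
      simpa using this.tendsto 0
    exact (hat.tendsto.comp hpath).mono_left nhdsWithin_le_nhds
  refine ge_of_tendsto hlim ?_
  filter_upwards [self_mem_nhdsWithin] with w (hw : 0 < w)
  nlinarith [hΦ a b w w ha hb hw hw, hnonneg w w hw hw]

theorem exists_near_superhomogeneousScalars (hΦ : WeightedSuperadditive α₁ α₂ Φ)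
    (hα₁ : 0 < α₁) (hα₁1 : α₁ < 1) (hα₂ : 0 < α₂) (hsum : 1 < α₁ + α₂) {ε : ℝ} (hε : 1 < ε) :
    ∃ x ∈ superhomogeneousScalars Φ, ∃ y ∈ superhomogeneousScalars Φ,
      1 < x ∧ x < y ∧ y < ε * x := by
  have hmem (n : ℕ) : affineOrbit α₁ α₂ n ∈ superhomogeneousScalars Φ := by
    induction n with
    | zero => simp [affineOrbit_zero hα₁1.ne, (superhomogeneousScalars Φ).one_mem]
    | succ n ih =>
      simpa [affineOrbit_succ hα₁1.ne] using
        hΦ.add_mem_superhomogeneousScalars hα₁ hα₂ ih (superhomogeneousScalars Φ).one_mem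
  have hlim := tendsto_affineOrbit (α₂ := α₂) hα₁.le hα₁1
  have hratio :
      Tendsto (fun n => affineOrbit α₁ α₂ (n + 1) / affineOrbit α₁ α₂ n) atTop (𝓝 1) := by
    have hL : α₂ / (1 - α₁) ≠ 0 := (div_pos hα₂ (sub_pos.2 hα₁1)).ne'
    rw [← div_self hL]
    exact (hlim.comp (tendsto_add_atTop_nat 1)).div hlim hL
  obtain ⟨n, hn, hn0⟩ := ((hratio.eventually (gt_mem_nhds hε)).and (eventually_ne_atTop 0)).exists
  have hx := one_lt_affineOrbit (α₂ := α₂) hα₁.le hα₁1 hsum hn0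
  exact ⟨_, hmem n, _, hmem (n + 1), hx, affineOrbit_lt_succ hα₁ hα₁1 hsum n,
    (div_lt_iff₀ (one_pos.trans hx)).1 hn⟩

theorem mul_le_map_mul (hΦ : WeightedSuperadditive α₁ α₂ Φ) (hα₁ : 0 < α₁) (hα₁1 : α₁ < 1)
    (hα₂ : 0 < α₂) (hsum : 1 < α₁ + α₂) (hnonneg : ∀ a b, 0 < a → 0 < b → 0 ≤ Φ a b)
    (hcont : ContinuousOn (Function.uncurry Φ) (Ioi 0 ×ˢ Ioi 0)) {γ : ℝ} (hγ : 0 < γ) {a b : ℝ}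
    (ha : 0 < a) (hb : 0 < b) : γ * Φ a b ≤ Φ (γ * a) (γ * b) := by
  have hdense := Ioi_zero_subset_closure_of_exists_near (superhomogeneousScalars Φ)
    (hΦ.mem_superhomogeneousScalars hα₁ hα₂ hnonneg hcont) hα₁ hα₁1
    fun _ hε => hΦ.exists_near_superhomogeneousScalars hα₁ hα₁1 hα₂ hsum hε
  have := mem_closure_iff_nhdsWithin_neBot.1 (hdense hγ)
  have hat : ContinuousAt (Function.uncurry Φ) (γ * a, γ * b) :=
    hcont.continuousAt ((isOpen_Ioi.prod isOpen_Ioi).mem_nhds ⟨mul_pos hγ ha, mul_pos hγ hb⟩)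
  have hpath : Tendsto (fun l : ℝ => (l * a, l * b)) (𝓝 γ) (𝓝 (γ * a, γ * b)) :=
    (by fun_prop : Continuous fun l : ℝ => (l * a, l * b)).tendsto γ
  refine le_of_tendsto_of_tendsto (b := 𝓝[superhomogeneousScalars Φ] γ)
    ((tendsto_id.mul_const _).mono_left nhdsWithin_le_nhds)
    ((hat.tendsto.comp hpath).mono_left nhdsWithin_le_nhds) ?_
  filter_upwards [self_mem_nhdsWithin] with l hl using hl.2 a b ha hb

theorem superadditive (hΦ : WeightedSuperadditive α₁ α₂ Φ) (hα₁ : 0 < α₁) (hα₂ : 0 < α₂)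
    (hhom : ∀ γ > 0, ∀ a b, 0 < a → 0 < b → Φ (γ * a) (γ * b) = γ * Φ a b) {x₁ x₂ y₁ y₂ : ℝ}
    (hx₁ : 0 < x₁) (hx₂ : 0 < x₂) (hy₁ : 0 < y₁) (hy₂ : 0 < y₂) :
    Φ x₁ x₂ + Φ y₁ y₂ ≤ Φ (x₁ + y₁) (x₂ + y₂) := by
  have h := hΦ (α₁⁻¹ * x₁) (α₁⁻¹ * x₂) (α₂⁻¹ * y₁) (α₂⁻¹ * y₂) (by positivity) (by positivity)
    (by positivity) (by positivity)
  rwa [hhom _ (inv_pos.2 hα₁) _ _ hx₁ hx₂, hhom _ (inv_pos.2 hα₂) _ _ hy₁ hy₂,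
    mul_inv_cancel_left₀ hα₁.ne', mul_inv_cancel_left₀ hα₂.ne', mul_inv_cancel_left₀ hα₁.ne',
    mul_inv_cancel_left₀ hα₂.ne', mul_inv_cancel_left₀ hα₁.ne', mul_inv_cancel_left₀ hα₂.ne'] at h

end WeightedSuperadditive

theorem stmt_14_general (φ φinv : ℝ → ℝ)
    (hφpos : ∀ t : ℝ, 0 < t → 0 < φ t)
    (hφmono : StrictMonoOn φ (Set.Ioi 0)) (hφcont : ContinuousOn φ (Set.Ioi 0))
    (hφinv : ∀ t : ℝ, 0 < t → φinv (φ t) = t)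
    (hφinv' : ∀ s : ℝ, 0 < s → 0 < φinv s ∧ φ (φinv s) = s)
    (α₁ α₂ β₁ β₂ : ℝ) (hα₁ : 0 < α₁) (hα₁1 : α₁ < 1) (hα₂ : 0 < α₂)
    (hαsum : 1 < α₁ + α₂) (hβ₁ : 0 < β₁) (hβ₂ : 0 < β₂)
    (hineq : ∀ s t u v : ℝ, 0 < s → 0 < t → 0 < u → 0 < v →
      α₁ * φinv (β₁ * φ s + β₂ * φ t) + α₂ * φinv (β₁ * φ u + β₂ * φ v) ≤
        φinv (β₁ * φ (α₁ * s + α₂ * u) + β₂ * φ (α₁ * t + α₂ * v))) :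
    (∀ γ : ℝ, 0 < γ → ∀ x₁ x₂ : ℝ, 0 < x₁ → 0 < x₂ →
      φinv (β₁ * φ (γ * x₁) + β₂ * φ (γ * x₂)) = γ * φinv (β₁ * φ x₁ + β₂ * φ x₂)) ∧
    (∀ x₁ x₂ y₁ y₂ : ℝ, 0 < x₁ → 0 < x₂ → 0 < y₁ → 0 < y₂ →
      φinv (β₁ * φ x₁ + β₂ * φ x₂) + φinv (β₁ * φ y₁ + β₂ * φ y₂) ≤
        φinv (β₁ * φ (x₁ + y₁) + β₂ * φ (x₂ + y₂))) := by
  have hΦ : WeightedSuperadditive α₁ α₂ fun a b => φinv (β₁ * φ a + β₂ * φ b) := hineq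
  have harg : ∀ a b, 0 < a → 0 < b → 0 < β₁ * φ a + β₂ * φ b := fun a b ha hb =>
    add_pos (mul_pos hβ₁ (hφpos a ha)) (mul_pos hβ₂ (hφpos b hb))
  have hφinv_mono : MonotoneOn φinv (Ioi 0) := fun s hs t ht hst => by
    rw [← hφmono.le_iff_le (hφinv' s hs).1 (hφinv' t ht).1, (hφinv' s hs).2, (hφinv' t ht).2]
    exact hst
  have hφinv_image : φinv '' Ioi 0 = Ioi 0 := by
    refine (image_subset_iff.2 fun s hs => (hφinv' s hs).1).antisymm fun t ht => ?_
    exact ⟨φ t, hφpos t ht, hφinv t ht⟩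
  have hcont : ContinuousOn (Function.uncurry fun a b => φinv (β₁ * φ a + β₂ * φ b))
      (Ioi 0 ×ˢ Ioi 0) :=
    (hφinv_mono.continuousOn_of_isOpen_image isOpen_Ioi (hφinv_image.symm ▸ isOpen_Ioi)).comp
      ((continuousOn_const.mul (hφcont.comp continuousOn_fst fun _ hp => hp.1)).add
        (continuousOn_const.mul (hφcont.comp continuousOn_snd fun _ hp => hp.2)))
      fun p hp => harg p.1 p.2 hp.1 hp.2
  have hhom := map_mul_eq_of_mul_le_map_mul fun γ hγ a b ha hb =>
    hΦ.mul_le_map_mul hα₁ hα₁1 hα₂ hαsum (fun a b ha hb => (hφinv' _ (harg a b ha hb)).1.le) hcont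
      hγ ha hb
  exact ⟨hhom, fun _ _ _ _ => hΦ.superadditive hα₁ hα₂ hhom⟩

theorem stmt_14 (φ φinv : ℝ → ℝ)
    (hφpos : ∀ t : ℝ, 0 < t → 0 < φ t)
    (hφmono : StrictMonoOn φ (Set.Ioi 0)) (hφcont : ContinuousOn φ (Set.Ioi 0))
    (hφsurj : φ '' Set.Ioi 0 = Set.Ioi 0)
    (hφinv : ∀ t : ℝ, 0 < t → φinv (φ t) = t)
    (hφinv' : ∀ s : ℝ, 0 < s → 0 < φinv s ∧ φ (φinv s) = s)
    (α₁ α₂ β₁ β₂ : ℝ) (hα₁ : 0 < α₁) (hα₁1 : α₁ < 1) (hα₂ : 0 < α₂)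
    (hαsum : 1 < α₁ + α₂) (hβ₁ : 0 < β₁) (hβ₂ : 0 < β₂)
    (hineq : ∀ s t u v : ℝ, 0 < s → 0 < t → 0 < u → 0 < v →
      α₁ * φinv (β₁ * φ s + β₂ * φ t) + α₂ * φinv (β₁ * φ u + β₂ * φ v) ≤
        φinv (β₁ * φ (α₁ * s + α₂ * u) + β₂ * φ (α₁ * t + α₂ * v))) :
    (∀ γ : ℝ, 0 < γ → ∀ x₁ x₂ : ℝ, 0 < x₁ → 0 < x₂ →
      φinv (β₁ * φ (γ * x₁) + β₂ * φ (γ * x₂)) = γ * φinv (β₁ * φ x₁ + β₂ * φ x₂)) ∧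
    (∀ x₁ x₂ y₁ y₂ : ℝ, 0 < x₁ → 0 < x₂ → 0 < y₁ → 0 < y₂ →
      φinv (β₁ * φ x₁ + β₂ * φ x₂) + φinv (β₁ * φ y₁ + β₂ * φ y₂) ≤
        φinv (β₁ * φ (x₁ + y₁) + β₂ * φ (x₂ + y₂))) :=
  stmt_14_general φ φinv hφpos hφmono hφcont hφinv hφinv' α₁ α₂ β₁ β₂ hα₁ hα₁1 hα₂ hαsum hβ₁ hβ₂
    hineq
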